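/- The function u(t,x) = A·sech^{2/3}(K(x - x₀) - ωt), with A > 0, ε > 0, K = 3(A³/(40ε))^{1/2}, and ω = K(1 + A³/10), satisfies the generalized KdV equation u_t + u_x + u³u_x + ε u_{xxx} = 0 wherever u is defined. -/

import Mathlib

noncomputable def sech (z : ℝ) : ℝ := 2 / (Real.exp z + Real.exp (-z))

/-! With `φ = sech^{2/3}`, the travelling wave `u = A φ(K(x - x₀) - ωt)` turns the equation
into `φ' (K - ω + K A³ φ³) + ε K³ φ''' = 0`. Since `φ' = -(2/3) φ tanh` and
`tanh' = sech² = φ³`, the profile solves `φ'' = 4/9 φ - 10/9 φ⁴`, hence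
`φ''' = (4/9 - 40/9 φ³) φ'`; the relations `ε K² = 9 A³ / 40` and `ω = K (1 + A³ / 10)`
then make the left-hand side vanish. -/

open Real

theorem Real.hasDerivAt_tanh (x : ℝ) : HasDerivAt tanh (1 - tanh x ^ 2) x := by
  have h : HasDerivAt tanh ((cosh x * cosh x - sinh x * sinh x) / cosh x ^ 2) x := by
    rw [funext tanh_eq_sinh_div_cosh]
    exact (hasDerivAt_sinh x).div (hasDerivAt_cosh x) (cosh_pos x).ne'
  refine h.congr_deriv ?_
  rw [tanh_eq_sinh_div_cosh]
  field_simp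

lemma sech_eq_inv_cosh (x : ℝ) : sech x = (cosh x)⁻¹ := by
  rw [sech, cosh_eq]
  field_simp

lemma sech_pos (x : ℝ) : 0 < sech x := by
  rw [sech_eq_inv_cosh]
  exact inv_pos.2 (cosh_pos x)

lemma sech_sq (x : ℝ) : sech x ^ 2 = 1 - tanh x ^ 2 := by
  rw [sech_eq_inv_cosh, tanh_eq_sinh_div_cosh]
  field_simp
  linear_combination -cosh_sq_sub_sinh_sq x

lemma hasDerivAt_sech (x : ℝ) : HasDerivAt sech (-(sech x * tanh x)) x := by
  have h : HasDerivAt sech (-sinh x / cosh x ^ 2) x := by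
    rw [funext sech_eq_inv_cosh]
    exact (hasDerivAt_cosh x).inv (cosh_pos x).ne'
  refine h.congr_deriv ?_
  rw [sech_eq_inv_cosh, tanh_eq_sinh_div_cosh]
  field_simp

lemma contDiff_sech {n : WithTop ℕ∞} : ContDiff ℝ n sech := by
  rw [funext sech_eq_inv_cosh]
  exact contDiff_cosh.inv fun x => (cosh_pos x).ne'

theorem iteratedDeriv_comp_mul_add {𝕜 : Type*} [NontriviallyNormedField 𝕜] {n : ℕ}
    {f : 𝕜 → 𝕜} (hf : ContDiff 𝕜 n f) (a b x : 𝕜) :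
    iteratedDeriv n (fun y => f (a * y + b)) x = a ^ n * iteratedDeriv n f (a * x + b) := by
  have hshift : ContDiff 𝕜 n (fun z => f (z + b)) := hf.comp (contDiff_id.add contDiff_const)
  rw [iteratedDeriv_comp_const_mul hshift a, iteratedDeriv_comp_add_const]

noncomputable def gkdvProfile (z : ℝ) : ℝ := sech z ^ ((2 : ℝ) / 3)

namespace gkdvProfile

lemma pow_three (z : ℝ) : gkdvProfile z ^ 3 = sech z ^ 2 := by
  rw [gkdvProfile, ← rpow_mul_natCast (sech_pos z).le]
  norm_num

lemma contDiff {n : WithTop ℕ∞} : ContDiff ℝ n gkdvProfile :=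
  contDiff_iff_contDiffAt.2 fun z =>
    contDiff_sech.contDiffAt.rpow_const_of_ne (sech_pos z).ne'

lemma hasDerivAt (z : ℝ) :
    HasDerivAt gkdvProfile (-(2 / 3) * gkdvProfile z * tanh z) z := by
  have hsech := (sech_pos z).ne'
  refine ((hasDerivAt_sech z).rpow_const (p := (2 : ℝ) / 3) (Or.inl hsech)).congr_deriv ?_
  rw [gkdvProfile, rpow_sub_one hsech]
  field_simp

lemma deriv_eq : deriv gkdvProfile = fun z => -(2 / 3) * gkdvProfile z * tanh z :=
  funext fun z => (hasDerivAt z).deriv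

lemma deriv_deriv_eq :
    deriv (deriv gkdvProfile) = fun z => 4 / 9 * gkdvProfile z - 10 / 9 * gkdvProfile z ^ 4 := by
  funext z
  rw [deriv_eq]
  refine (((hasDerivAt z).const_mul (-(2 / 3))).mul (hasDerivAt_tanh z)).deriv.trans ?_
  have h := pow_three z
  rw [sech_sq] at h
  linear_combination (10 / 9 * gkdvProfile z) * h

lemma iteratedDeriv_three (z : ℝ) :
    iteratedDeriv 3 gkdvProfile z =
      (4 / 9 - 40 / 9 * gkdvProfile z ^ 3) * deriv gkdvProfile z := by
  rw [iteratedDeriv_succ, iteratedDeriv_succ, iteratedDeriv_one, deriv_deriv_eq]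
  refine ((((hasDerivAt z).const_mul (4 / 9)).sub
    (((hasDerivAt z).pow 4).const_mul (10 / 9))).deriv).trans ?_
  rw [deriv_eq]
  ring

end gkdvProfile

theorem gkdv_soliton_exact_solution (A ε x₀ : ℝ) (hA : 0 < A) (hε : 0 < ε)
    (K ω : ℝ) (hK : K = 3 * Real.sqrt (A ^ 3 / (40 * ε)))
    (hω : ω = K * (1 + A ^ 3 / 10))
    (u : ℝ → ℝ → ℝ)
    (hu : ∀ t x, u t x = A * (sech (K * (x - x₀) - ω * t)) ^ ((2 : ℝ) / 3)) :
    ∀ t x : ℝ,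
      deriv (fun t' => u t' x) t + deriv (fun x' => u t x') x
        + (u t x) ^ 3 * deriv (fun x' => u t x') x
        + ε * deriv^[3] (fun x' => u t x') x = 0 := by
  intro t x
  set z := K * (x - x₀) - ω * t
  have hwave (n : ℕ) (a b y : ℝ) :
      iteratedDeriv n (fun y' => A * gkdvProfile (a * y' + b)) y =
        A * (a ^ n * iteratedDeriv n gkdvProfile (a * y + b)) := by
    rw [iteratedDeriv_const_mul_field, iteratedDeriv_comp_mul_add gkdvProfile.contDiff]
  have hspace : (fun x' => u t x') = fun x' => A * gkdvProfile (K * x' + -(K * x₀ + ω * t)) := by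
    funext x'; rw [hu, gkdvProfile]; ring_nf
  have htime : (fun t' => u t' x) = fun t' => A * gkdvProfile (-ω * t' + K * (x - x₀)) := by
    funext t'; rw [hu, gkdvProfile]; ring_nf
  have hεK : ε * K ^ 2 = 9 * A ^ 3 / 40 := by
    rw [hK, mul_pow, sq_sqrt (by positivity)]
    field_simp
    ring
  have hzx : K * x + -(K * x₀ + ω * t) = z := by ring
  have hzt : -ω * t + K * (x - x₀) = z := by ring
  rw [← iteratedDeriv_one, ← iteratedDeriv_one, ← iteratedDeriv_eq_iterate, hspace, htime,
    hwave, hwave, hwave, hzx, hzt, gkdvProfile.iteratedDeriv_three, iteratedDeriv_one,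
    show u t x = A * gkdvProfile z from hu t x]
  linear_combination (A * deriv gkdvProfile z * K * (4 / 9 - 40 / 9 * gkdvProfile z ^ 3)) * hεK
    - (A * deriv gkdvProfile z) * hω
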